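/- Let r ≥ 1 be a natural number, let F : ℝⁿ → ℝⁿ be smooth (C^∞), let h : ℝⁿ → ℝ be smooth, and let α_1, …, α_{r-1} : ℝ → ℝ be smooth extended class K functions. For any choice of constants c_1, …, c_{r-1} > 0, define b_0 = h and b_j = L_F b_{j-1} + c_j · (α_j ∘ b_{j-1}) for j = 1, …, r-1. Then for every compact set X₀ ⊆ ℝⁿ with h(x) > 0 for all x ∈ X₀, there exist constants c_1, …, c_{r-1} > 0 such that b_j(x) > 0 for all x ∈ X₀ and all j = 0, …, r-1; that is, X₀ ⊆ ⋂_{j=1}^{r} Int(C_j) where Int(C_j) = {x : b_{j-1}(x) > 0}. -/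

import Mathlib

/-- The chain of higher-order barrier functions: `b_0 = h` and
`b_{j+1} = L_F b_j + c_{j+1} · (α_{j+1} ∘ b_j)`. -/
noncomputable def bSeq {n : ℕ} (F : EuclideanSpace ℝ (Fin n) → EuclideanSpace ℝ (Fin n))
    (c : ℕ → ℝ) (α : ℕ → ℝ → ℝ) (h : EuclideanSpace ℝ (Fin n) → ℝ) :
    ℕ → EuclideanSpace ℝ (Fin n) → ℝ
  | 0 => h
  | j + 1 => fun x =>
      fderiv ℝ (bSeq F c α h j) x (F x) + c (j + 1) * α (j + 1) (bSeq F c α h j x)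

lemma bSeq_congr {n : ℕ} (F : EuclideanSpace ℝ (Fin n) → EuclideanSpace ℝ (Fin n))
    (c c' : ℕ → ℝ) (α : ℕ → ℝ → ℝ) (h : EuclideanSpace ℝ (Fin n) → ℝ) (j : ℕ)
    (hc : ∀ i, 1 ≤ i → i ≤ j → c i = c' i) :
    bSeq F c α h j = bSeq F c' α h j := by
  induction j with
  | zero => rfl
  | succ j ih =>
    have hj : bSeq F c α h j = bSeq F c' α h j :=
      ih fun i h1 h2 => hc i h1 (h2.trans (Nat.le_succ j))
    funext x
    simp only [bSeq, hj, hc (j + 1) (Nat.succ_le_succ (Nat.zero_le j)) le_rfl]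

lemma bSeq_contDiff {n : ℕ} (F : EuclideanSpace ℝ (Fin n) → EuclideanSpace ℝ (Fin n))
    (hF : ContDiff ℝ (⊤ : ℕ∞) F)
    (c : ℕ → ℝ) (α : ℕ → ℝ → ℝ) (h : EuclideanSpace ℝ (Fin n) → ℝ) (hh : ContDiff ℝ (⊤ : ℕ∞) h)
    (j : ℕ) (hα : ∀ i, 1 ≤ i → i ≤ j → ContDiff ℝ (⊤ : ℕ∞) (α i)) :
    ContDiff ℝ (⊤ : ℕ∞) (bSeq F c α h j) := by
  induction j with
  | zero => exact hh
  | succ j ih =>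
    have hb : ContDiff ℝ (⊤ : ℕ∞) (bSeq F c α h j) :=
      ih fun i h1 h2 => hα i h1 (h2.trans (Nat.le_succ j))
    have h1 : ContDiff ℝ (⊤ : ℕ∞) fun x => fderiv ℝ (bSeq F c α h j) x (F x) :=
      (hb.fderiv_right (by simp)).clm_apply hF
    have h2 : ContDiff ℝ (⊤ : ℕ∞) fun x => c (j + 1) * α (j + 1) (bSeq F c α h j x) :=
      contDiff_const.mul ((hα (j + 1) (Nat.succ_le_succ (Nat.zero_le j)) le_rfl).comp hb)
    exact h1.add h2

/-- Proposition 1 (second part): for any compact set `X₀ ⊆ Int(C_1) = {x : h x > 0}`,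
the constants `c_1, …, c_{r-1} > 0` can be chosen so that all barrier functions
`b_0, …, b_{r-1}` of the chain are positive on `X₀`, i.e. `X₀ ⊆ ⋂_{j=1}^r Int(C_j)`. -/
theorem exists_rescaling_constants {n : ℕ} (r : ℕ) (hr : 1 ≤ r)
    (F : EuclideanSpace ℝ (Fin n) → EuclideanSpace ℝ (Fin n)) (hF : ContDiff ℝ (⊤ : ℕ∞) F)
    (h : EuclideanSpace ℝ (Fin n) → ℝ) (hh : ContDiff ℝ (⊤ : ℕ∞) h)
    (α : ℕ → ℝ → ℝ)
    (hα : ∀ j : ℕ, 1 ≤ j → j ≤ r - 1 →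
      StrictMono (α j) ∧ α j 0 = 0 ∧ ContDiff ℝ (⊤ : ℕ∞) (α j))
    (X₀ : Set (EuclideanSpace ℝ (Fin n))) (hX₀ : IsCompact X₀)
    (hpos : ∀ x ∈ X₀, 0 < h x) :
    ∃ c : ℕ → ℝ, (∀ j : ℕ, 1 ≤ j → j ≤ r - 1 → 0 < c j) ∧
      ∀ j ≤ r - 1, ∀ x ∈ X₀, 0 < bSeq F c α h j x := by
  rcases Set.eq_empty_or_nonempty X₀ with hE | hne
  · refine ⟨fun _ => 1, fun j _ _ => one_pos, fun j _ x hx => ?_⟩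
    rw [hE] at hx; exact absurd hx (Set.notMem_empty x)
  -- strengthen: prove for all k ≤ r - 1
  suffices H : ∀ k, k ≤ r - 1 → ∃ c : ℕ → ℝ,
      (∀ j : ℕ, 1 ≤ j → j ≤ k → 0 < c j) ∧
      ∀ j ≤ k, ∀ x ∈ X₀, 0 < bSeq F c α h j x by
    obtain ⟨c, hc1, hc2⟩ := H (r - 1) le_rfl
    exact ⟨c, hc1, hc2⟩
  intro k
  induction k with
  | zero =>
    intro _
    refine ⟨fun _ => 1, fun j h1 h2 => absurd (h1.trans h2) (by norm_num), ?_⟩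
    intro j hj x hx
    interval_cases j
    exact hpos x hx
  | succ k ih =>
    intro hk
    obtain ⟨c, hc1, hc2⟩ := ih ((Nat.le_succ k).trans hk)
    obtain ⟨hmono, hzero, hsmooth⟩ := hα (k + 1) (Nat.succ_le_succ (Nat.zero_le k)) hk
    -- smoothness of b_k
    have hαsm : ∀ i, 1 ≤ i → i ≤ k → ContDiff ℝ (⊤ : ℕ∞) (α i) := fun i h1 h2 =>
      (hα i h1 (h2.trans ((Nat.le_succ k).trans hk))).2.2
    have hbk : ContDiff ℝ (⊤ : ℕ∞) (bSeq F c α h k) := bSeq_contDiff F hF c α h hh k hαsm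
    -- min of b_k on X₀
    obtain ⟨xm, hxm, hmin⟩ := hX₀.exists_isMinOn hne hbk.continuous.continuousOn
    set m := bSeq F c α h k xm with hm
    have hmpos : 0 < m := hc2 k le_rfl xm hxm
    have hαm : 0 < α (k + 1) m := by
      have := hmono hmpos; rwa [hzero] at this
    -- min of Lie derivative on X₀
    have hg : Continuous fun x => fderiv ℝ (bSeq F c α h k) x (F x) :=
      ((hbk.fderiv_right (by simp)).clm_apply hF).continuous
    obtain ⟨x₀, hx₀, hgmin⟩ := hX₀.exists_isMinOn hne hg.continuousOn
    set M := fderiv ℝ (bSeq F c α h k) x₀ (F x₀) with hM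
    set C := (1 + |M|) / α (k + 1) m with hC
    have hCpos : 0 < C := div_pos (by positivity) hαm
    set c' : ℕ → ℝ := fun i => if i = k + 1 then C else c i with hc'
    have hagree : ∀ i, 1 ≤ i → i ≤ k → c i = c' i := by
      intro i h1 h2
      simp only [hc']
      rw [if_neg (show ¬ i = k + 1 by omega)]
    have hbeq : bSeq F c α h k = bSeq F c' α h k := bSeq_congr F c c' α h k hagree
    refine ⟨c', ?_, ?_⟩
    · intro j h1 h2
      rcases Nat.lt_or_ge j (k + 1) with hlt | hge
      · simp only [hc']
        rw [if_neg (show ¬ j = k + 1 by omega)]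
        exact hc1 j h1 (by omega)
      · have : j = k + 1 := by omega
        simp only [hc', this, if_pos rfl]
        exact hCpos
    · intro j hj x hx
      rcases Nat.lt_or_ge j (k + 1) with hlt | hge
      · rw [← bSeq_congr F c c' α h j fun i h1 h2 => hagree i h1 (by omega)]
        exact hc2 j (by omega) x hx
      · have hjeq : j = k + 1 := by omega
        subst hjeq
        have : bSeq F c' α h (k + 1) x =
            fderiv ℝ (bSeq F c α h k) x (F x) + C * α (k + 1) (bSeq F c α h k x) := by
          show fderiv ℝ (bSeq F c' α h k) x (F x) + c' (k + 1) * α (k + 1) (bSeq F c' α h k x) = _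
          rw [← hbeq]
          simp only [hc', if_pos rfl]
        rw [this]
        have h1 : M ≤ fderiv ℝ (bSeq F c α h k) x (F x) := hgmin hx
        have h2 : α (k + 1) m ≤ α (k + 1) (bSeq F c α h k x) :=
          hmono.monotone (hmin hx)
        have h3 : C * α (k + 1) m ≤ C * α (k + 1) (bSeq F c α h k x) :=
          mul_le_mul_of_nonneg_left h2 hCpos.le
        have h4 : C * α (k + 1) m = 1 + |M| := by
          rw [hC, div_mul_cancel₀ _ hαm.ne']
        have := neg_abs_le M
        nlinarith
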